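/- arXiv:1207.0964 — 6 statements merged into one kernel-verified Lean document; each statement's English description precedes it below -/
import Mathlib

section
/- There exist nonrepetitive sequences of every length over a 3-element alphabet (Thue's theorem): for every n there is a sequence of length n over {1,2,3} containing no two identical adjacent blocks. -/
/-!
The Thue–Morse word `t` (the parity of the binary digit sum) is overlap-free: it contains no
block `x y x y x` with `x` a letter. For an overlap of even period `2h`, the letters at even
offsets give an overlap of period `h`, because `t (2n + r) = xor r (t n)`; for an odd period
`h ≥ 3`, shifting by `h` turns every pair `t (2m + 1), t (2m + 2)` of the block into an aligned
pair `t (2k), t (2k + 1)`, which always differ, and this forces three equal consecutive letters.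

Code each adjacent pair `(t n, t (n + 1))` by a letter of `{0, 1, 2}`, sending both constant
pairs to `2`. The code of a pair determines its second bit from the first, and the first bit
unless the pair is constant; so a square of period `h` at position `i` in the coded word forces
`t (i + j) = t (i + h + j)` for all `j ≤ h`, an overlap.
-/

def Nonrepetitive {α : Type*} (f : ℕ → α) : Prop :=
  ∀ i h, 0 < h → ∃ j < h, f (i + j) ≠ f (i + h + j)

def OverlapFree {α : Type*} (f : ℕ → α) : Prop :=
  ∀ i h, 0 < h → ∃ j ≤ h, f (i + j) ≠ f (i + h + j)

theorem OverlapFree.not_three_eq {α : Type*} {f : ℕ → α} (hf : OverlapFree f) (i : ℕ) :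
    ¬ (f i = f (i + 1) ∧ f (i + 1) = f (i + 2)) := by
  rintro ⟨h₀, h₁⟩
  obtain ⟨j, hj, hne⟩ := hf i 1 one_pos
  interval_cases j
  · exact hne h₀
  · exact hne h₁

def thueMorse : ℕ → Bool
  | 0 => false
  | n + 1 => xor (n + 1).bodd (thueMorse ((n + 1) / 2))

theorem thueMorse_of_ne_zero {n : ℕ} (hn : n ≠ 0) :
    thueMorse n = xor n.bodd (thueMorse (n / 2)) := by
  obtain ⟨m, rfl⟩ := Nat.exists_eq_succ_of_ne_zero hn
  rw [thueMorse]

theorem thueMorse_two_mul (n : ℕ) : thueMorse (2 * n) = thueMorse n := by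
  rcases Nat.eq_zero_or_pos n with rfl | hn
  · rfl
  · simp [thueMorse_of_ne_zero (show 2 * n ≠ 0 by omega), Nat.bodd_mul]

theorem thueMorse_two_mul_add_one (n : ℕ) : thueMorse (2 * n + 1) = !thueMorse n := by
  rw [thueMorse_of_ne_zero (by omega), show (2 * n + 1) / 2 = n by omega]
  simp [Nat.bodd_mul]

theorem thueMorse_two_mul_ne (n : ℕ) : thueMorse (2 * n) ≠ thueMorse (2 * n + 1) := by
  simp [thueMorse_two_mul, thueMorse_two_mul_add_one]

theorem thueMorse_eq_iff_of_mod_two_eq {m n : ℕ} (h : m % 2 = n % 2) :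
    thueMorse m = thueMorse n ↔ thueMorse (m / 2) = thueMorse (n / 2) := by
  rw [← Nat.div_add_mod m 2, ← Nat.div_add_mod n 2, ← h]
  rcases Nat.mod_two_eq_zero_or_one m with h0 | h1
  · simp [h0, thueMorse_two_mul]
  · simp [h1, thueMorse_two_mul_add_one, Nat.mul_add_div]

theorem thueMorse_not_three_eq (i : ℕ) :
    ¬ (thueMorse i = thueMorse (i + 1) ∧ thueMorse (i + 1) = thueMorse (i + 2)) := by
  rintro ⟨h₀, h₁⟩
  rcases Nat.even_or_odd' i with ⟨m, rfl | rfl⟩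
  · exact thueMorse_two_mul_ne m h₀
  · exact thueMorse_two_mul_ne (m + 1) h₁

theorem thueMorse_overlap_half {i h : ℕ}
    (H : ∀ j ≤ 2 * h, thueMorse (i + j) = thueMorse (i + 2 * h + j)) :
    ∀ j ≤ h, thueMorse (i / 2 + j) = thueMorse (i / 2 + h + j) := by
  intro j hj
  have := (thueMorse_eq_iff_of_mod_two_eq (by omega)).1 (H (2 * j) (by omega))
  rwa [show (i + 2 * j) / 2 = i / 2 + j by omega,
    show (i + 2 * h + 2 * j) / 2 = i / 2 + h + j by omega] at this

theorem thueMorse_overlap_one_of_overlap_odd {i h : ℕ} (hh : 0 < h)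
    (H : ∀ j ≤ 2 * h + 1, thueMorse (i + j) = thueMorse (i + (2 * h + 1) + j)) :
    thueMorse (i / 2) = thueMorse (i / 2 + 1) ∧
      thueMorse (i / 2 + 1) = thueMorse (i / 2 + 2) := by
  have shift : ∀ k, i ≤ k → k ≤ i + (2 * h + 1) → thueMorse k = thueMorse (k + (2 * h + 1)) := by
    intro k hk₁ hk₂
    simpa [show i + (k - i) = k by omega, add_right_comm] using H (k - i) (by omega)
  -- `2m + 1 ± (2h + 1)` is even, so one of the two shifts of the pair is an aligned pair.
  have succ_eq : ∀ m, i ≤ 2 * m + 1 → 2 * m + 2 ≤ i + 2 * (2 * h + 1) →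
      thueMorse m = thueMorse (m + 1) := by
    intro m hm₁ hm₂
    have hne : thueMorse (2 * m + 1) ≠ thueMorse (2 * (m + 1)) := by
      rcases le_or_gt (2 * m + 2) (i + (2 * h + 1)) with hle | hgt
      · rw [shift _ hm₁ (by omega), show 2 * (m + 1) = 2 * m + 2 by ring, shift _ (by omega) hle,
          show 2 * m + 1 + (2 * h + 1) = 2 * (m + h + 1) by ring,
          show 2 * m + 2 + (2 * h + 1) = 2 * (m + h + 1) + 1 by ring]
        exact thueMorse_two_mul_ne _
      · rw [show 2 * m + 1 = 2 * (m - h) + (2 * h + 1) by omega,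
          show 2 * (m + 1) = 2 * (m - h) + 1 + (2 * h + 1) by omega,
          ← shift _ (by omega) (by omega), ← shift _ (by omega) (by omega)]
        exact thueMorse_two_mul_ne _
    simpa [thueMorse_two_mul_add_one, thueMorse_two_mul] using hne
  exact ⟨succ_eq _ (by omega) (by omega), succ_eq _ (by omega) (by omega)⟩

theorem thueMorse_overlapFree : OverlapFree thueMorse := by
  intro i h hh
  by_contra! H
  induction h using Nat.strong_induction_on generalizing i with
  | _ h ih =>
    obtain ⟨h', rfl | rfl⟩ := Nat.even_or_odd' h
    · exact ih h' (by omega) (i / 2) (by omega) (thueMorse_overlap_half H)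
    · rcases Nat.eq_zero_or_pos h' with rfl | hh'
      · exact thueMorse_not_three_eq i ⟨H 0 (by omega), H 1 (by omega)⟩
      · exact thueMorse_not_three_eq (i / 2) (thueMorse_overlap_one_of_overlap_odd hh' H)

def pairCode (b c : Bool) : Fin 3 :=
  if b = c then 2 else if b then 1 else 0

theorem pairCode_eq_two_iff {b c : Bool} : pairCode b c = 2 ↔ b = c := by
  revert b c; decide

theorem eq_of_pairCode_eq_of_ne_two {b c b' c' : Bool} (h : pairCode b c = pairCode b' c')
    (h₂ : pairCode b c ≠ 2) : b = b' := by
  revert b c b' c'; decide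

theorem eq_of_pairCode_eq_of_eq {b c b' c' : Bool} (h : pairCode b c = pairCode b' c')
    (hb : b = b') : c = c' := by
  revert b c b' c'; decide

theorem OverlapFree.nonrepetitive_pairCode {f : ℕ → Bool} (hf : OverlapFree f) :
    Nonrepetitive fun n => pairCode (f n) (f (n + 1)) := by
  intro i h hh
  by_contra! H
  have base : f i = f (i + h) := by
    by_cases h₂ : pairCode (f i) (f (i + 1)) = 2
    · have e₀ := pairCode_eq_two_iff.1 h₂
      have eh : f (i + h) = f (i + h + 1) := pairCode_eq_two_iff.1 ((H 0 hh).symm.trans h₂)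
      obtain rfl | hh₁ := (show 1 ≤ h from hh).eq_or_lt
      · exact absurd ⟨e₀, eh⟩ (hf.not_three_eq i)
      · have h₂' : pairCode (f (i + 1)) (f (i + 2)) ≠ 2 :=
          fun hc => hf.not_three_eq i ⟨e₀, pairCode_eq_two_iff.1 hc⟩
        have e₁ := eq_of_pairCode_eq_of_ne_two (H 1 hh₁) h₂'
        rw [e₀, e₁, eh]
    · exact eq_of_pairCode_eq_of_ne_two (H 0 hh) h₂
  have step : ∀ j ≤ h, f (i + j) = f (i + h + j) := by
    intro j hj
    induction j with
    | zero => exact base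
    | succ j ih => exact eq_of_pairCode_eq_of_eq (H j (by omega)) (ih (by omega))
  obtain ⟨j, hj, hne⟩ := hf i h hh
  exact hne (step j hj)

/-- Thue: for every n there is a nonrepetitive sequence of length n over a
3-element alphabet. -/
theorem stmt_1 (n : ℕ) :
    ∃ a : ℕ → Fin 3, ∀ i h : ℕ, 1 ≤ h → i + 2 * h ≤ n →
      ∃ j < h, a (i + j) ≠ a (i + h + j) :=
  ⟨fun k => pairCode (thueMorse k) (thueMorse (k + 1)), fun i h hh _ =>
     thueMorse_overlapFree.nonrepetitive_pairCode i h hh⟩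
end

section
/- Let (a_n) be defined by a_1 = 5, a_2 = 17, a_3 = 57, and for n ≥ 4, a_n = a_{n-1} + 4a_{n-2} + 4·2·a_{n-3} + ... + 4(n-2)·a_1 + 4(n-1) + 4n (i.e., a_n = a_{n-1} + Σ_{k=1}^{n-2} 4k·a_{n-1-k} + 4(n-1) + 4n). Then for all n ≥ 4, a_n = 3a_{n-1} + a_{n-2} + a_{n-3}. -/
lemma reidx (f : ℕ → ℕ) (m : ℕ) :
    ∑ k ∈ Finset.Icc 1 m, f k = ∑ k ∈ Finset.Icc 1 m, f (m + 1 - k) := by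
  refine Finset.sum_nbij' (fun k => m + 1 - k) (fun k => m + 1 - k) ?_ ?_ ?_ ?_ ?_ <;>
    intro k hk <;> simp only [Finset.mem_Icc] at * <;> try omega
  congr 1
  omega

lemma sumid (a : ℕ → ℕ) (t : ℕ) :
    ∑ k ∈ Finset.Icc 1 (t + 1), 4 * k * a (t + 2 - k)
      = (∑ k ∈ Finset.Icc 1 t, 4 * k * a (t + 1 - k))
        + ∑ j ∈ Finset.Icc 1 (t + 1), 4 * a j := by
  have hL : ∑ k ∈ Finset.Icc 1 (t + 1), 4 * k * a (t + 2 - k)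
      = ∑ j ∈ Finset.Icc 1 (t + 1), 4 * (t + 2 - j) * a j := by
    rw [reidx (fun j => 4 * (t + 2 - j) * a j) (t + 1)]
    apply Finset.sum_congr rfl
    intro k hk
    simp only [Finset.mem_Icc] at hk
    have h1 : t + 1 + 1 - (t + 1 + 1 - k) = k := by omega
    have h2 : t + 2 - (t + 1 + 1 - k) = k := by omega
    rw [h2]

  have hR : ∑ k ∈ Finset.Icc 1 t, 4 * k * a (t + 1 - k)
      = ∑ j ∈ Finset.Icc 1 t, 4 * (t + 1 - j) * a j := by
    rw [reidx (fun j => 4 * (t + 1 - j) * a j) t]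
    apply Finset.sum_congr rfl
    intro k hk
    simp only [Finset.mem_Icc] at hk
    have h2 : t + 1 - (t + 1 - k) = k := by omega
    rw [h2]

  rw [hL, hR]
  rw [Finset.sum_Icc_succ_top (by omega : 1 ≤ t + 1),
      Finset.sum_Icc_succ_top (by omega : 1 ≤ t + 1)]
  have : ∑ j ∈ Finset.Icc 1 t, 4 * (t + 2 - j) * a j
      = ∑ j ∈ Finset.Icc 1 t, (4 * (t + 1 - j) * a j + 4 * a j) := by
    apply Finset.sum_congr rfl
    intro j hj
    simp only [Finset.mem_Icc] at hj
    have : 4 * (t + 2 - j) = 4 * (t + 1 - j) + 4 := by omega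
    rw [this]
    ring
  rw [this, Finset.sum_add_distrib]
  have h41 : 4 * (t + 2 - (t + 1)) * a (t + 1) = 4 * a (t + 1) := by
    congr 2
    omega
  rw [h41]
  ring

/-- From the full-history recurrence with initial values 5, 17, 57,
the third-order linear recurrence `a n = 3a(n-1) + a(n-2) + a(n-3)` follows. -/
theorem stmt_2 (a : ℕ → ℕ) (h1 : a 1 = 5) (h2 : a 2 = 17) (h3 : a 3 = 57)
    (hrec : ∀ n, 4 ≤ n →
      a n = a (n - 1) + (∑ k ∈ Finset.Icc 1 (n - 2), 4 * k * a (n - 1 - k))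
            + 4 * (n - 1) + 4 * n) :
    ∀ n, 4 ≤ n → a n = 3 * a (n - 1) + a (n - 2) + a (n - 3) := by
  -- key identity: for m ≥ 3, a(m+2) + a(m) = 2*a(m+1) + ∑_{j=1}^m 4*a j + 8
  have key : ∀ m, 3 ≤ m →
      a (m + 2) + a m = 2 * a (m + 1) + (∑ j ∈ Finset.Icc 1 m, 4 * a j) + 8 := by
    intro m hm
    obtain ⟨t, rfl⟩ : ∃ t, m = t + 1 := ⟨m - 1, by omega⟩
    have e1 := hrec (t + 3) (by omega)
    have e2 := hrec (t + 2) (by omega)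
    simp only [show t + 3 - 1 = t + 2 by omega, show t + 3 - 2 = t + 1 by omega,
      show t + 2 - 1 = t + 1 by omega, show t + 2 - 2 = t by omega] at e1 e2
    have es1 : ∑ k ∈ Finset.Icc 1 (t + 1), 4 * k * a (t + 2 - k)
        = (∑ k ∈ Finset.Icc 1 t, 4 * k * a (t + 1 - k))
          + ∑ j ∈ Finset.Icc 1 (t + 1), 4 * a j := sumid a t
    simp only [show t + 1 + 2 = t + 3 by omega, show t + 1 + 1 = t + 2 by omega]
    omega
  intro n hn
  rcases eq_or_lt_of_le hn with h4 | h
  · -- n = 4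
    subst h4
    have e := hrec 4 (by norm_num)
    norm_num [Finset.sum_Icc_succ_top, h1, h2, h3] at e ⊢
    omega
  rcases eq_or_lt_of_le (Nat.succ_le_of_lt h) with h5 | h'
  · -- n = 5
    have h5' : n = 5 := h5.symm
    subst h5'
    have e4 := hrec 4 (by norm_num)
    have e5 := hrec 5 (by norm_num)
    norm_num [Finset.sum_Icc_succ_top, h1, h2, h3] at e4 e5 ⊢
    omega
  -- n ≥ 6
  obtain ⟨s, rfl⟩ : ∃ s, n = s + 3 := ⟨n - 3, by omega⟩
  have hs : 3 ≤ s := by omega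
  have k1 := key s hs
  have k2 := key (s + 1) (by omega)
  simp only [show s + 1 + 2 = s + 3 by omega, show s + 1 + 1 = s + 2 by omega] at k2
  have hsplit : ∑ j ∈ Finset.Icc 1 (s + 1), 4 * a j
      = (∑ j ∈ Finset.Icc 1 s, 4 * a j) + 4 * a (s + 1) :=
    Finset.sum_Icc_succ_top (by omega) _
  simp only [show s + 3 - 1 = s + 2 by omega, show s + 3 - 2 = s + 1 by omega,
    show s + 3 - 3 = s by omega]
  omega
end

section
/- The two non-real complex roots of λ³ − 3λ² − λ − 1 have absolute value at most 0.544. -/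
/-!
If `z` is a non-real root, then `conj z` is a root too and the third root is the real number
`r = 3 - 2 re z`. Vieta's formulas give `q r = 1` and `q + 2 re z · r = -1` for `q = |z|²`;
eliminating `r` shows that `q` is a root of the increasing polynomial `q³ + q² + 3q - 1`,
which is already positive at `0.544²`.
-/

open Complex

theorem sq_eq_two_re_mul_sub_normSq (z : ℂ) : z ^ 2 = 2 * z.re * z - normSq z := by
  have hadd := add_conj z
  push_cast at hadd
  linear_combination z * hadd - mul_conj z

theorem vieta_of_nonreal_root {z : ℂ} (hroot : z ^ 3 - 3 * z ^ 2 - z - 1 = 0) (him : z.im ≠ 0) :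
    normSq z + 2 * z.re * (3 - 2 * z.re) = -1 ∧ normSq z * (3 - 2 * z.re) = 1 := by
  -- The remainder of the cubic modulo `X² - 2 re z · X + |z|²`, evaluated at `z`.
  have hrem : ((-1 - normSq z - 2 * z.re * (3 - 2 * z.re) : ℝ) : ℂ) * z
      + ((normSq z * (3 - 2 * z.re) - 1 : ℝ) : ℂ) = 0 := by
    push_cast
    linear_combination hroot - (z - (3 - 2 * z.re)) * sq_eq_two_re_mul_sub_normSq z
  have hlin : -1 - normSq z - 2 * z.re * (3 - 2 * z.re) = 0 := by
    simpa [him] using congrArg im hrem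
  rw [hlin, ofReal_zero, zero_mul, zero_add, ofReal_eq_zero] at hrem
  constructor <;> linarith

theorem normSq_cubic_of_nonreal_root {z : ℂ} (hroot : z ^ 3 - 3 * z ^ 2 - z - 1 = 0)
    (him : z.im ≠ 0) : normSq z ^ 3 + normSq z ^ 2 + 3 * normSq z - 1 = 0 := by
  obtain ⟨hsum, hprod⟩ := vieta_of_nonreal_root hroot him
  linear_combination normSq z ^ 2 * hsum
    + (normSq z * (3 - 2 * z.re) + 1 - 3 * normSq z) * hprod

theorem le_of_cubic_eq_zero {q : ℝ} (h : q ^ 3 + q ^ 2 + 3 * q - 1 = 0) : q ≤ 0.544 ^ 2 := by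
  nlinarith [sq_nonneg q, sq_nonneg (q + 1)]

/-- The non-real complex roots of `λ³ − 3λ² − λ − 1` have absolute value at most
0.544. -/
theorem stmt_6 (z : ℂ) (hroot : z ^ 3 - 3 * z ^ 2 - z - 1 = 0) (him : z.im ≠ 0) :
    ‖z‖ ≤ 0.544 := by
  have hsq : ‖z‖ ^ 2 ≤ 0.544 ^ 2 := by
    rw [Complex.sq_norm]
    exact le_of_cubic_eq_zero (normSq_cubic_of_nonreal_root hroot him)
  exact (pow_le_pow_iff_left₀ (norm_nonneg z) (by norm_num) two_ne_zero).mp hsq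
end

section
/- Let a_n = Σ_{I ∈ {1,-1}^n} g(I), where g(I) = ∏ 4h_i over the lengths h_i of the maximal blocks of -1's in I (g(I)=1 if no -1 occurs). Then a_n ≥ 2^n for all n ≥ 1, and a_n / 4^n → ∞ is false; indeed a_n = O(3.383^n). -/
open Filter

def gweight (l : List ℤ) : ℕ :=
  ((l.splitOn 1).map (fun b => if b.length = 0 then 1 else 4 * b.length)).prod

def aseq (n : ℕ) : ℕ :=
  ∑ f : Fin n → Bool, gweight (List.ofFn fun i => if f i then (1 : ℤ) else -1)

def gw : List ℤ → ℕ × ℕ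
  | [] => (0, 1)
  | x :: l =>
    let p := gw l
    if x = 1 then (0, (if p.1 = 0 then 1 else 4 * p.1) * p.2)
    else (p.1 + 1, p.2)

lemma gw_one_cons (l : List ℤ) :
    gw (1 :: l) = (0, (if (gw l).1 = 0 then 1 else 4 * (gw l).1) * (gw l).2) := by
  simp [gw]

lemma gw_ne_cons {x : ℤ} (hx : x ≠ 1) (l : List ℤ) :
    gw (x :: l) = ((gw l).1 + 1, (gw l).2) := by
  simp [gw, hx]

lemma gw_neg_cons (l : List ℤ) : gw (-1 :: l) = ((gw l).1 + 1, (gw l).2) :=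
  gw_ne_cons (by norm_num) l

lemma gw_key (l : List ℤ) :
    ∃ b t, l.splitOn 1 = b :: t ∧ b.length = (gw l).1 ∧
      ((t.map fun b => if b.length = 0 then 1 else 4 * b.length).prod) = (gw l).2 := by
  induction l with
  | nil => exact ⟨[], [], rfl, rfl, rfl⟩
  | cons x l ih =>
    obtain ⟨b, t, h1, h2, h3⟩ := ih
    by_cases hx : x = 1
    · subst hx
      refine ⟨[], b :: t, ?_, ?_, ?_⟩
      · simp only [List.splitOn] at h1 ⊢
        rw [List.splitOnP_cons, if_pos (by simp), h1]
      · rw [gw_one_cons]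
        rfl
      · rw [gw_one_cons, List.map_cons, List.prod_cons, h2, h3]
    · refine ⟨x :: b, t, ?_, ?_, ?_⟩
      · simp only [List.splitOn] at h1 ⊢
        rw [List.splitOnP_cons, if_neg (by simpa using hx), h1]
        rfl
      · rw [gw_ne_cons hx, List.length_cons, h2]
      · rw [gw_ne_cons hx]; exact h3

lemma gweight_eq (l : List ℤ) :
    gweight l = (if (gw l).1 = 0 then 1 else 4 * (gw l).1) * (gw l).2 := by
  obtain ⟨b, t, h1, h2, h3⟩ := gw_key l
  rw [gweight, h1, List.map_cons, List.prod_cons, h2, h3]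

def Bseq (n : ℕ) : ℕ :=
  ∑ f : Fin n → Bool, 4 * (gw (List.ofFn fun i => if f i then (1 : ℤ) else -1)).1 *
    (gw (List.ofFn fun i => if f i then (1 : ℤ) else -1)).2

def Cseq (n : ℕ) : ℕ :=
  ∑ f : Fin n → Bool, (gw (List.ofFn fun i => if f i then (1 : ℤ) else -1)).2

lemma sum_succ (n : ℕ) (G : List ℤ → ℕ) :
    ∑ f : Fin (n + 1) → Bool, G (List.ofFn fun i => if f i then (1 : ℤ) else -1) =
    ∑ f : Fin n → Bool,
      (G (1 :: List.ofFn fun i => if f i then (1 : ℤ) else -1) +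
       G (-1 :: List.ofFn fun i => if f i then (1 : ℤ) else -1)) := by
  rw [← (Fin.consEquiv (fun _ : Fin (n + 1) => Bool)).sum_comp
      (fun f : Fin (n + 1) → Bool => G (List.ofFn fun i => if f i then (1 : ℤ) else -1)),
    Fintype.sum_prod_type, Fintype.sum_bool, ← Finset.sum_add_distrib]
  refine Finset.sum_congr rfl fun f _ => ?_
  congr 1 <;>
  · rw [List.ofFn_succ]
    simp [Fin.consEquiv]

lemma aseq_eq (n : ℕ) :
    aseq n = ∑ f : Fin n → Bool,
      (if (gw (List.ofFn fun i => if f i then (1 : ℤ) else -1)).1 = 0 then 1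
        else 4 * (gw (List.ofFn fun i => if f i then (1 : ℤ) else -1)).1) *
      (gw (List.ofFn fun i => if f i then (1 : ℤ) else -1)).2 := by
  unfold aseq
  exact Finset.sum_congr rfl fun f _ => gweight_eq _

lemma aseq_zero : aseq 0 = 1 := by decide
lemma Bseq_zero : Bseq 0 = 0 := by decide
lemma Cseq_zero : Cseq 0 = 1 := by decide

lemma Cseq_succ (n : ℕ) : Cseq (n + 1) = aseq n + Cseq n := by
  rw [Cseq, sum_succ n (fun l => (gw l).2), aseq_eq, Cseq, ← Finset.sum_add_distrib]
  refine Finset.sum_congr rfl fun f _ => ?_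
  rw [gw_one_cons, gw_neg_cons]

lemma Bseq_succ (n : ℕ) : Bseq (n + 1) = Bseq n + 4 * Cseq n := by
  rw [Bseq, sum_succ n (fun l => 4 * (gw l).1 * (gw l).2), Bseq, Cseq,
    Finset.mul_sum, ← Finset.sum_add_distrib]
  refine Finset.sum_congr rfl fun f _ => ?_
  rw [gw_one_cons, gw_neg_cons]
  dsimp only
  ring

lemma aseq_succ (n : ℕ) : aseq (n + 1) = aseq n + Bseq n + 4 * Cseq n := by
  rw [aseq_eq, sum_succ n
    (fun l => (if (gw l).1 = 0 then 1 else 4 * (gw l).1) * (gw l).2),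
    aseq_eq, Bseq, Cseq, Finset.mul_sum, ← Finset.sum_add_distrib,
    ← Finset.sum_add_distrib]
  refine Finset.sum_congr rfl fun f _ => ?_
  rw [gw_one_cons, gw_neg_cons]
  dsimp only
  have h0 : (if (0 : ℕ) = 0 then 1 else 4 * 0) = 1 := rfl
  rw [h0, one_mul, if_neg (Nat.succ_ne_zero _)]
  ring

lemma Cseq_le_aseq (n : ℕ) : Cseq n ≤ aseq n := by
  induction n with
  | zero => rw [aseq_zero, Cseq_zero]
  | succ n ih =>
    rw [Cseq_succ, aseq_succ]
    omega

lemma two_pow_le_Cseq (n : ℕ) : 2 ^ n ≤ Cseq n := by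
  induction n with
  | zero => simp [Cseq_zero]
  | succ n ih =>
    rw [Cseq_succ, pow_succ]
    have := Cseq_le_aseq n
    omega

lemma upper (n : ℕ) :
    (aseq n : ℝ) ≤ 2.383 * 3.383 ^ n ∧ (Bseq n : ℝ) ≤ 1.6786 * 3.383 ^ n ∧
      (Cseq n : ℝ) ≤ 3.383 ^ n := by
  induction n with
  | zero => norm_num [aseq_zero, Bseq_zero, Cseq_zero]
  | succ n ih =>
    obtain ⟨hA, hB, hC⟩ := ih
    have hp : (0 : ℝ) ≤ 3.383 ^ n := by positivity
    rw [aseq_succ, Bseq_succ, Cseq_succ]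
    push_cast
    rw [pow_succ]
    refine ⟨by nlinarith, by nlinarith, by nlinarith⟩

/-- `a_n ≥ 2^n`, `a_n / 4^n` does not tend to infinity; indeed `a_n = O(3.383^n)`. -/
theorem stmt_13 :
    (∀ n, 1 ≤ n → 2 ^ n ≤ aseq n) ∧
    ¬ Tendsto (fun n : ℕ => (aseq n : ℝ) / 4 ^ n) atTop atTop ∧
    ∃ C : ℝ, 0 < C ∧ ∀ n : ℕ, (aseq n : ℝ) ≤ C * (3.383 : ℝ) ^ n := by
  refine ⟨fun n _ => le_trans (two_pow_le_Cseq n) (Cseq_le_aseq n), ?_, ⟨2.383, by norm_num,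
    fun n => (upper n).1⟩⟩
  intro h
  obtain ⟨n, hn⟩ := (h.eventually_ge_atTop 3).exists
  have h4 : (0 : ℝ) < 4 ^ n := by positivity
  have hle : (aseq n : ℝ) ≤ 2.383 * 4 ^ n := by
    refine le_trans (upper n).1 ?_
    have : (3.383 : ℝ) ^ n ≤ 4 ^ n := pow_le_pow_left₀ (by norm_num) (by norm_num) n
    nlinarith
  rw [le_div_iff₀ h4] at hn
  nlinarith
end

section
/- For every facial path P of length 2h in a plane graph G with fixed face orientations and fixed labelings of the two appearances of each edge, and every edge e of P lying in the second half of P, the map P ↦ v(e,P) = (h, q, a, o) is injective: given e and the vector v, the path P is uniquely determined. -/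
/-- A (connected) plane graph presented combinatorially by the oriented boundary
walks of its faces, where every edge appears exactly twice among all boundary
walks, together with a fixed labeling (by `1` and `2`, here `Fin 2`) of the two
appearances of each edge: `app e a = (i, j)` records that the appearance of `e`
labeled `a` is at position `j` of the boundary walk of the `i`-th face. -/
structure LabeledFacialGraph (E : Type*) [DecidableEq E] where
  faces : List (List E)
  appears_twice : ∀ e : E, ((faces.map fun w => w.count e).sum) = 2
  app : E → Fin 2 → ℕ × ℕ
  app_valid : ∀ e a, ∃ w, faces[(app e a).1]? = some w ∧
      w[(app e a).2]? = some e
  app_inj : ∀ e, app e 0 ≠ app e 1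

/-- `P` occurs as a segment of the boundary walk `w`, read cyclically, starting
at position `s`. -/
def SegAt {E : Type*} (w : List E) (s : ℕ) (P : List E) : Prop :=
  ∀ t < P.length, P[t]? = w[(s + t) % w.length]?

/-- `IsV G e P (h, q, a, o)` encodes the vector `v(e,P) = (h, q, a, o)` of the
paper: `P` is a facial path of length `2h` whose `q`-th edge (with
`q ∈ [h+1, 2h]`, i.e. `e` lies in the second half of `P`) is `e`; the string
`P` (if `o = 1`) or its reverse (if `o = 2`) occurs in the oriented boundary
walk of a face so that the corresponding occurrence of `e` is its appearance
labeled `a`. -/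
def IsV {E : Type*} [DecidableEq E] (G : LabeledFacialGraph E) (e : E)
    (P : List E) (v : ℕ × ℕ × Fin 2 × Fin 2) : Prop :=
  match v with
  | (h, q, a, o) =>
    1 ≤ h ∧ P.length = 2 * h ∧ h + 1 ≤ q ∧ q ≤ 2 * h ∧ P[q - 1]? = some e ∧
    P.Nodup ∧
    ∃ w, G.faces[(G.app e a).1]? = some w ∧ P.length ≤ w.length ∧
      ((o = 0 ∧ ∃ s, SegAt w s P ∧ (s + (q - 1)) % w.length = (G.app e a).2) ∨
       (o = 1 ∧ ∃ s, SegAt w s P.reverse ∧ (s + (2 * h - q)) % w.length = (G.app e a).2))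

/-!
Both occurrences of the path lie in the boundary walk of the face holding the appearance of `e`
labeled `a`, with that appearance at the same offset (`q - 1` in `P`, or `2h - q` in its reverse).
So they start at the same position of the cyclic walk, and equal-length segments starting there
coincide.
-/
namespace SegAt

variable {E : Type*} {w A B : List E} {s s' : ℕ}

theorem eq_of_modEq (hA : SegAt w s A) (hB : SegAt w s' B) (hlen : A.length = B.length)
    (hmod : s ≡ s' [MOD w.length]) : A = B := by
  refine List.ext_getElem? fun t => ?_
  by_cases ht : t < A.length
  · rw [hA t ht, hB t (hlen ▸ ht), hmod.add_right t]
  · rw [List.getElem?_eq_none (by omega), List.getElem?_eq_none (by omega)]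

theorem eq_of_add_mod_eq {k : ℕ} (hA : SegAt w s A) (hB : SegAt w s' B)
    (hlen : A.length = B.length) (hk : (s + k) % w.length = (s' + k) % w.length) : A = B :=
  hA.eq_of_modEq hB hlen (Nat.ModEq.add_right_cancel' k hk)

end SegAt

/-- Given the edge `e` and the vector `v(e,P) = (h, q, a, o)`, the facial path
`P` is uniquely determined; i.e. `P ↦ v(e,P)` is injective. -/
theorem stmt_17 {E : Type*} [DecidableEq E] (G : LabeledFacialGraph E) (e : E)
    (P P' : List E) (v : ℕ × ℕ × Fin 2 × Fin 2)
    (hP : IsV G e P v) (hP' : IsV G e P' v) : P = P' := by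
  obtain ⟨h, q, a, o⟩ := v
  obtain ⟨-, hl, -, -, -, -, w, hw, -, hc⟩ := hP
  obtain ⟨-, hl', -, -, -, -, w', hw', -, hc'⟩ := hP'
  obtain rfl : w = w' := Option.some_injective _ (hw.symm.trans hw')
  rcases hc with ⟨rfl, s, hseg, hs⟩ | ⟨rfl, s, hseg, hs⟩
  · obtain ⟨s', hseg', hs'⟩ := (hc'.resolve_right (by simp)).2
    exact hseg.eq_of_add_mod_eq hseg' (by omega) (hs.trans hs'.symm)
  · obtain ⟨s', hseg', hs'⟩ := (hc'.resolve_left (by simp)).2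
    exact List.reverse_injective <|
      hseg.eq_of_add_mod_eq hseg' (by simp [hl, hl']) (hs.trans hs'.symm)
end

section
/- Every plane graph G admits, for every assignment of lists of size 12 to its edges, an edge colouring from the lists such that no facial path of G is repetitively coloured; i.e., the facial Thue choice index of every plane graph is at most 12. -/
/-- A (connected) plane graph presented combinatorially by the boundary walks of
its faces: each face is a cyclic list of edges (with a fixed orientation), and
every edge appears exactly twice among the boundary walks of all faces. -/
structure FacialGraph (E : Type*) [DecidableEq E] where
  faces : List (List E)
  appears_twice : ∀ e : E, ((faces.map fun w => w.count e).sum) = 2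

/-- `P` is a facial path: a (nonrepeated-edge) path whose consecutive edges are
consecutive edges of the boundary walk of some face, read cyclically in one of
the two directions (`w ++ w` accounts for cyclic wrap-around). -/
def IsFacialPath {E : Type*} [DecidableEq E] (G : FacialGraph E) (P : List E) : Prop :=
  P.Nodup ∧ ∃ w ∈ G.faces, P.length ≤ w.length ∧
    (P <:+: (w ++ w) ∨ P.reverse <:+: (w ++ w))

/-! Rosenfeld's counting argument. Let `C(S)` be the number of colourings of an edge set `S` from
the lists under which no facial path inside `S` is repetitive; we show `C(S ∪ {v}) ≥ 4 C(S)` by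
strong induction on `S`, so that `C(E) ≥ 4^|E| > 0`. Among the `12 C(S)` extensions of good
colourings of `S` by a colour at `v`, those making a facial path `P` of length `2h` through `v`
repetitive are determined by their restriction to `S` minus the half of `P` containing `v`, so by
induction there are at most `C(S ∖ half) ≤ 4^(1-h) C(S)` of them. Each of the two occurrences of
`v` on face boundaries lies in at most `2h` windows of length `2h`, so at most
`2 ∑_h 2h 4^(1-h) C(S) < 8 C(S)` extensions are bad. -/

open Finset

section Lists

variable {α : Type*}

theorem card_filter_getElem?_eq_count [DecidableEq α] (l : List α) (a : α) :
    #{i ∈ range l.length | l[i]? = some a} = l.count a := by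
  induction l with
  | nil => simp
  | cons b t ih =>
    rw [List.length_cons, card_filter, sum_range_succ', ← card_filter, List.count_cons]
    simp only [List.getElem?_cons_succ, List.getElem?_cons_zero, Option.some.injEq, beq_iff_eq, ih]

theorem card_filter_mem_take_rotate_le [DecidableEq α] (w : List α) (a : α) (m : ℕ) :
    #{s ∈ range w.length | a ∈ (w.rotate s).take m} ≤ m * w.count a := by
  have hcover : {s ∈ range w.length | a ∈ (w.rotate s).take m} ⊆
      (range m).biUnion fun t => {s ∈ range w.length | (w.rotate t)[s]? = some a} := by
    intro s hs
    simp only [mem_filter, mem_range, List.mem_iff_getElem?, List.getElem?_take] at hs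
    obtain ⟨hs, t, ht⟩ := hs
    split_ifs at ht with htm
    have htw : t < w.length := by
      by_contra! h
      rw [List.getElem?_eq_none (by simpa using h)] at ht
      cases ht
    rw [List.getElem?_rotate htw] at ht
    simp only [mem_biUnion, mem_range, mem_filter]
    exact ⟨t, htm, hs, by rwa [List.getElem?_rotate hs, Nat.add_comm]⟩
  calc _ ≤ _ := card_le_card hcover
    _ ≤ ∑ t ∈ range m, #{s ∈ range w.length | (w.rotate t)[s]? = some a} := card_biUnion_le
    _ = m * w.count a := by
      rw [sum_const_nat fun t _ => ?_, card_range]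
      rw [← (List.rotate_perm w t).count_eq, ← card_filter_getElem?_eq_count, List.length_rotate]

theorem exists_prefix_rotate_of_infix_append_self {P w : List α} (hP : P <:+: w ++ w)
    (hlen : P.length ≤ w.length) : ∃ s, P <+: w.rotate s := by
  obtain ⟨l, t, hlt⟩ := hP
  have hPX : P <+: (w ++ w).drop l.length := ⟨t, by rw [← hlt, List.append_assoc, List.drop_left]⟩
  have hl : l.length ≤ 2 * w.length := by
    have := congrArg List.length hlt
    simp only [List.length_append] at this
    omega
  rcases le_or_gt w.length l.length with hwl | hlw
  · refine ⟨l.length - w.length, hPX.trans ?_⟩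
    rw [List.drop_append, List.drop_eq_nil_of_le hwl, List.nil_append,
      List.rotate_eq_drop_append_take (by omega)]
    exact List.prefix_append _ _
  · refine ⟨l.length, List.prefix_of_prefix_length_le hPX ?_ (by simpa using hlen)⟩
    rw [List.rotate_eq_drop_append_take hlw.le, List.drop_append_of_le_length hlw.le]
    exact (List.prefix_append_right_inj _).2 (List.take_prefix _ _)

end Lists

section Repetitive

variable {E α : Type*}

-- The empty list is repetitive, and lists of odd length never are.
def IsRepetitive (c : E → α) (P : List E) : Prop :=
  (P.take (P.length / 2)).map c = (P.drop (P.length / 2)).map c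

instance [DecidableEq α] (c : E → α) (P : List E) : Decidable (IsRepetitive c P) :=
  inferInstanceAs (Decidable (_ = _))

variable {c c₁ c₂ : E → α} {P : List E}

theorem isRepetitive_congr (h : ∀ e ∈ P, c₁ e = c₂ e) :
    IsRepetitive c₁ P ↔ IsRepetitive c₂ P := by
  unfold IsRepetitive
  rw [List.map_congr_left fun e he => h e (List.mem_of_mem_take he),
    List.map_congr_left fun e he => h e (List.mem_of_mem_drop he)]

theorem IsRepetitive.even_length (hc : IsRepetitive c P) : Even P.length := by
  have := congrArg List.length hc
  simp only [List.length_map, List.length_take, List.length_drop] at this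
  exact Nat.even_iff.2 (by omega)

theorem IsRepetitive.eqOn_take_iff_eqOn_drop (h₁ : IsRepetitive c₁ P) (h₂ : IsRepetitive c₂ P) :
    (∀ e ∈ P.take (P.length / 2), c₁ e = c₂ e) ↔ ∀ e ∈ P.drop (P.length / 2), c₁ e = c₂ e := by
  rw [← List.map_inj_left, ← List.map_inj_left, h₁, h₂]

theorem isRepetitive_iff {h : ℕ} (hP : P.length = 2 * h) :
    IsRepetitive c P ↔ ∀ i < h, (P.map c)[i]? = (P.map c)[h + i]? := by
  rw [IsRepetitive, hP, Nat.mul_div_cancel_left _ two_pos, List.map_take, List.map_drop,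
    List.ext_getElem?_iff]
  refine forall_congr' fun i => ?_
  rw [List.getElem?_take, List.getElem?_drop]
  split_ifs with hi
  · simp [hi]
  · simp only [hi, false_implies, iff_true]
    rw [List.getElem?_eq_none (by simp [hP]; omega)]

theorem isRepetitive_reverse_iff (hP : Even P.length) :
    IsRepetitive c P.reverse ↔ IsRepetitive c P := by
  obtain ⟨h, hh⟩ := hP
  have hsub : P.length - P.length / 2 = P.length / 2 := by omega
  rw [IsRepetitive, IsRepetitive, List.length_reverse, List.take_reverse, List.drop_reverse, hsub,
    List.map_reverse, List.map_reverse, List.reverse_inj, eq_comm]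

theorem exists_half_of_mem_take [DecidableEq E] {v : E} (hP : P.Nodup)
    (hv : v ∈ P.take (P.length / 2)) :
    ∃ H : Finset E, v ∈ H ∧ (∀ e ∈ H, e ∈ P) ∧ H.card = P.length / 2 ∧
      ∀ c₁ c₂ : E → α, IsRepetitive c₁ P → IsRepetitive c₂ P → (∀ e ∉ H, c₁ e = c₂ e) →
        c₁ = c₂ := by
  have hdisj := List.disjoint_take_drop hP (le_refl (P.length / 2))
  refine ⟨(P.take (P.length / 2)).toFinset, List.mem_toFinset.2 hv,
    fun e he => List.mem_of_mem_take (List.mem_toFinset.1 he), ?_, ?_⟩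
  · rw [List.toFinset_card_of_nodup ((List.take_sublist _ _).nodup hP), List.length_take]
    omega
  · intro c₁ c₂ h₁ h₂ hoff
    funext e
    by_cases he : e ∈ P.take (P.length / 2)
    · refine (h₁.eqOn_take_iff_eqOn_drop h₂).2 (fun e' he' => hoff e' ?_) e he
      exact fun h' => hdisj (List.mem_toFinset.1 h') he'
    · exact hoff e (by simpa using he)

theorem exists_half_of_mem [DecidableEq E] {v : E} (hP : P.Nodup) (heven : Even P.length)
    (hv : v ∈ P) :
    ∃ H : Finset E, v ∈ H ∧ (∀ e ∈ H, e ∈ P) ∧ H.card = P.length / 2 ∧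
      ∀ c₁ c₂ : E → α, IsRepetitive c₁ P → IsRepetitive c₂ P → (∀ e ∉ H, c₁ e = c₂ e) →
        c₁ = c₂ := by
  by_cases hvt : v ∈ P.take (P.length / 2)
  · exact exists_half_of_mem_take hP hvt
  have hvr : v ∈ P.reverse.take (P.reverse.length / 2) := by
    obtain ⟨k, hk⟩ := heven
    rw [← List.take_append_drop (P.length / 2) P, List.mem_append] at hv
    rw [List.take_reverse, List.mem_reverse, List.length_reverse]
    convert hv.resolve_left hvt using 2
    omega
  obtain ⟨H, hvH, hHP, hcard, hdet⟩ := exists_half_of_mem_take (List.nodup_reverse.2 hP) hvr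
  refine ⟨H, hvH, fun e he => List.mem_reverse.1 (hHP e he), by simpa using hcard, ?_⟩
  intro c₁ c₂ h₁ h₂
  rw [← isRepetitive_reverse_iff heven] at h₁ h₂
  exact hdet c₁ c₂ h₁ h₂

end Repetitive

section Growth

variable {E : Type*} [DecidableEq E]

theorem pow_card_sub_mul_le_of_forall_ssubset {f : Finset E → ℝ} {β : ℝ} (hβ : 0 ≤ β)
    {S S' : Finset E} (hgrow : ∀ R ⊂ S, ∀ v ∉ R, β * f R ≤ f (insert v R)) (hS' : S' ⊆ S) :
    β ^ (#S - #S') * f S' ≤ f S := by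
  suffices ∀ T ⊆ S \ S', β ^ #T * f S' ≤ f (S' ∪ T) by
    simpa [card_sdiff_of_subset hS', union_sdiff_of_subset hS'] using this _ subset_rfl
  intro T hT
  induction T using Finset.induction_on with
  | empty => simp
  | insert a T haT ih =>
    have haS := mem_sdiff.1 (hT (mem_insert_self a T))
    have hTS := (insert_subset_iff.1 hT).2
    have haST : a ∉ S' ∪ T := by simp [haS.2, haT]
    have hsub : S' ∪ T ⊂ S := (ssubset_iff_of_subset
      (union_subset hS' fun x hx => (mem_sdiff.1 (hTS hx)).1)).2 ⟨a, haS.1, haST⟩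
    calc β ^ #(insert a T) * f S' = β * (β ^ #T * f S') := by rw [card_insert_of_notMem haT]; ring
      _ ≤ β * f (S' ∪ T) := mul_le_mul_of_nonneg_left (ih hTS) hβ
      _ ≤ f (insert a (S' ∪ T)) := hgrow _ hsub a haST
      _ = f (S' ∪ insert a T) := by rw [union_insert]

end Growth

section Counting

variable {E α : Type*} [DecidableEq E] [Fintype E] [DecidableEq α] [Inhabited α]
  (W : Finset (List E)) (L : E → Finset α)

/-- Partial colourings of `D` are encoded as total functions equal to `default` off `D`. -/
def goodColorings (D S : Finset E) : Finset (E → α) :=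
  (Fintype.piFinset fun e => if e ∈ D then L e else {default}).filter
    fun c => ∀ P ∈ W, (∀ e ∈ P, e ∈ S) → ¬IsRepetitive c P

variable {W L} {β : ℝ}

theorem mem_goodColorings {D S : Finset E} {c : E → α} :
    c ∈ goodColorings W L D S ↔ (∀ e, c e ∈ if e ∈ D then L e else {default}) ∧
      ∀ P ∈ W, (∀ e ∈ P, e ∈ S) → ¬IsRepetitive c P := by
  simp [goodColorings, Fintype.mem_piFinset]

theorem card_goodColorings_insert {S : Finset E} {v : E} (hv : v ∉ S) :
    #(goodColorings W L (insert v S) S) = #(goodColorings W L S S) * #(L v) := by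
  have hupd : ∀ (c : E → α) (a : α) (P : List E), (∀ e ∈ P, e ∈ S) →
      (IsRepetitive (Function.update c v a) P ↔ IsRepetitive c P) :=
    fun c a P hPS => isRepetitive_congr fun e he =>
      Function.update_of_ne (ne_of_mem_of_not_mem (hPS e he) hv) _ _
  rw [← card_product]
  refine (card_nbij' (fun c : E → α => (Function.update c v default, c v))
    (fun p => Function.update p.1 v p.2) ?_ ?_ ?_ ?_)
  · intro c hc
    simp only [coe_product, Set.mem_prod, mem_coe, mem_goodColorings] at hc ⊢
    refine ⟨⟨fun e => ?_, fun P hP hPS => (hupd c _ P hPS).not.2 (hc.2 P hP hPS)⟩, ?_⟩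
    · by_cases he : e = v
      · subst he; simp [hv]
      · simpa [he] using hc.1 e
    · simpa using hc.1 v
  · rintro ⟨c, a⟩ hp
    simp only [coe_product, Set.mem_prod, mem_coe, mem_goodColorings] at hp ⊢
    refine ⟨fun e => ?_, fun P hP hPS => (hupd c a P hPS).not.2 (hp.1.2 P hP hPS)⟩
    by_cases he : e = v
    · subst he; simpa using hp.2
    · simpa [he] using hp.1.1 e
  · intro c _
    simp
  · rintro ⟨c, a⟩ hp
    simp only [coe_product, Set.mem_prod, mem_coe, mem_goodColorings] at hp
    have hcv : c v = default := by simpa [hv] using hp.1.1 v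
    simp [← hcv]

theorem card_filter_isRepetitive_le_card_sdiff {D S H : Finset E} {P : List E}
    (hdet : ∀ c₁ c₂ : E → α, IsRepetitive c₁ P → IsRepetitive c₂ P → (∀ e ∉ H, c₁ e = c₂ e) →
      c₁ = c₂) :
    #{c ∈ goodColorings W L D S | IsRepetitive c P} ≤ #(goodColorings W L (D \ H) (S \ H)) := by
  refine card_le_card_of_injOn (fun c e => if e ∈ H then default else c e) ?_ ?_
  · intro c hc
    simp only [coe_filter, Set.mem_ofPred_eq, mem_goodColorings, mem_coe] at hc ⊢
    refine ⟨fun e => ?_, fun Q hQ hQS => ?_⟩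
    · by_cases he : e ∈ H
      · simp [he]
      · simpa [he] using hc.1.1 e
    · rw [isRepetitive_congr fun e he => if_neg (mem_sdiff.1 (hQS e he)).2]
      exact hc.1.2 Q hQ fun e he => (mem_sdiff.1 (hQS e he)).1
  · intro c₁ hc₁ c₂ hc₂ heq
    simp only [coe_filter, Set.mem_ofPred_eq] at hc₁ hc₂
    refine hdet c₁ c₂ hc₁.2 hc₂.2 fun e he => ?_
    simpa [he] using congrFun heq e

theorem sdiff_goodColorings_subset_biUnion {S : Finset E} {v : E} :
    goodColorings W L (insert v S) S \ goodColorings W L (insert v S) (insert v S) ⊆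
      {P ∈ W | v ∈ P ∧ ∀ e ∈ P, e ∈ insert v S}.biUnion
        fun P => {c ∈ goodColorings W L (insert v S) S | IsRepetitive c P} := by
  intro c hc
  rw [mem_sdiff, mem_goodColorings, mem_goodColorings] at hc
  obtain ⟨⟨hcL, hcS⟩, hcT⟩ := hc
  have ⟨P, hP, hPT, hrep⟩ : ∃ P ∈ W, (∀ e ∈ P, e ∈ insert v S) ∧ IsRepetitive c P := by
    by_contra! h
    exact hcT ⟨hcL, h⟩
  have hvP : v ∈ P := by
    by_contra hvP
    refine hcS P hP (fun e he => ?_) hrep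
    exact (mem_insert.1 (hPT e he)).resolve_left (ne_of_mem_of_not_mem he hvP)
  simp only [mem_biUnion, mem_filter, mem_goodColorings]
  exact ⟨P, ⟨hP, hvP, hPT⟩, ⟨hcL, hcS⟩, hrep⟩

theorem card_filter_isRepetitive_le_inv_pow (hβ : 0 < β) {S : Finset E} {v : E} (hv : v ∉ S)
    (hS : ∀ S' ⊆ S, β ^ (#S - #S') * #(goodColorings W L S' S') ≤ #(goodColorings W L S S))
    {P : List E} (hP : P.Nodup) (hvP : v ∈ P) (hPT : ∀ e ∈ P, e ∈ insert v S) :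
    (#{c ∈ goodColorings W L (insert v S) S | IsRepetitive c P} : ℝ) ≤
      β⁻¹ ^ (P.length / 2 - 1) * #(goodColorings W L S S) := by
  rcases eq_empty_or_nonempty {c ∈ goodColorings W L (insert v S) S | IsRepetitive c P}
    with hempty | ⟨c, hc⟩
  · rw [hempty, card_empty, Nat.cast_zero]
    positivity
  obtain ⟨H, hvH, hHP, hcard, hdet⟩ :=
    exists_half_of_mem hP (mem_filter.1 hc).2.even_length hvP
  have hbad := card_filter_isRepetitive_le_card_sdiff (W := W) (L := L) (D := insert v S) (S := S)
    hdet
  rw [insert_sdiff_of_mem _ hvH] at hbad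
  have hHT : H ⊆ insert v S := fun e he => hPT e (hHP e he)
  have hexp : #S - #(S \ H) = P.length / 2 - 1 := by
    have h1 := card_sdiff_of_subset hHT
    rw [insert_sdiff_of_mem _ hvH, card_insert_of_notMem hv] at h1
    have h2 := card_le_card hHT
    have h3 := card_pos.2 ⟨v, hvH⟩
    rw [card_insert_of_notMem hv] at h2
    omega
  have hchain := hS (S \ H) sdiff_subset
  rw [hexp] at hchain
  calc (#{c ∈ goodColorings W L (insert v S) S | IsRepetitive c P} : ℝ)
      ≤ #(goodColorings W L (S \ H) (S \ H)) := by exact_mod_cast hbad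
    _ ≤ β⁻¹ ^ (P.length / 2 - 1) * #(goodColorings W L S S) := by
      rw [inv_pow, ← div_eq_inv_mul, le_div_iff₀' (by positivity)]
      exact hchain

theorem mul_card_goodColorings_le_of_pow_le (hβ : 0 < β) (hW : ∀ P ∈ W, P.Nodup) {S : Finset E}
    {v : E} (hv : v ∉ S) (hL : β + ∑ P ∈ W with v ∈ P, β⁻¹ ^ (P.length / 2 - 1) ≤ #(L v))
    (hS : ∀ S' ⊆ S, β ^ (#S - #S') * #(goodColorings W L S' S') ≤ #(goodColorings W L S S)) :
    β * #(goodColorings W L S S) ≤ #(goodColorings W L (insert v S) (insert v S)) := by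
  set a : ℝ := (#(goodColorings W L S S) : ℝ)
  have hbad :
      (#(goodColorings W L (insert v S) S \ goodColorings W L (insert v S) (insert v S)) : ℝ) ≤
        (∑ P ∈ W with v ∈ P, β⁻¹ ^ (P.length / 2 - 1)) * a := by
    rw [sum_mul]
    calc _ ≤ ((∑ P ∈ W with v ∈ P ∧ ∀ e ∈ P, e ∈ insert v S,
            #{c ∈ goodColorings W L (insert v S) S | IsRepetitive c P} : ℕ) : ℝ) := by
          exact_mod_cast (card_le_card sdiff_goodColorings_subset_biUnion).trans card_biUnion_le
      _ ≤ ∑ P ∈ W with v ∈ P ∧ ∀ e ∈ P, e ∈ insert v S, β⁻¹ ^ (P.length / 2 - 1) * a := by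
          push_cast
          refine sum_le_sum fun P hP => ?_
          obtain ⟨hPW, hvP, hPT⟩ := mem_filter.1 hP
          exact card_filter_isRepetitive_le_inv_pow hβ hv hS (hW P hPW) hvP hPT
      _ ≤ ∑ P ∈ W with v ∈ P, β⁻¹ ^ (P.length / 2 - 1) * a :=
          sum_le_sum_of_subset_of_nonneg (fun P hP =>
            mem_filter.2 ⟨(mem_filter.1 hP).1, (mem_filter.1 hP).2.1⟩)
            fun _ _ _ => by positivity
  have hext : (#(goodColorings W L (insert v S) S) : ℝ) = a * #(L v) := by
    rw [card_goodColorings_insert hv, Nat.cast_mul]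
  have hsplit : (#(goodColorings W L (insert v S) S) : ℝ) ≤
      #(goodColorings W L (insert v S) S \ goodColorings W L (insert v S) (insert v S)) +
        #(goodColorings W L (insert v S) (insert v S)) := by
    exact_mod_cast card_le_card_sdiff_add_card
  have hLa := mul_le_mul_of_nonneg_right hL (by positivity : 0 ≤ a)
  linarith

theorem mul_card_goodColorings_le_card_insert (hβ : 0 < β) (hW : ∀ P ∈ W, P.Nodup)
    (hL : ∀ v, β + ∑ P ∈ W with v ∈ P, β⁻¹ ^ (P.length / 2 - 1) ≤ #(L v)) (S : Finset E) :
    ∀ v ∉ S, β * #(goodColorings W L S S) ≤ #(goodColorings W L (insert v S) (insert v S)) := by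
  induction S using Finset.strongInduction with
  | H S ih =>
    exact fun v hv => mul_card_goodColorings_le_of_pow_le hβ hW hv (hL v)
      fun S' hS' => pow_card_sub_mul_le_of_forall_ssubset hβ.le ih hS'

theorem exists_forall_not_isRepetitive (hW : ∀ P ∈ W, P.Nodup ∧ P ≠ []) (hβ : 0 < β)
    (hL : ∀ v, β + ∑ P ∈ W with v ∈ P, β⁻¹ ^ (P.length / 2 - 1) ≤ #(L v)) :
    ∃ c : E → α, (∀ e, c e ∈ L e) ∧ ∀ P ∈ W, ¬IsRepetitive c P := by
  have hdefault : default ∈ goodColorings W L ∅ ∅ := by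
    refine mem_goodColorings.2 ⟨fun e => by simp, fun P hP hPS _ => (hW P hP).2 ?_⟩
    exact List.eq_nil_iff_forall_not_mem.2 fun e he => notMem_empty e (hPS e he)
  have hgrowth := pow_card_sub_mul_le_of_forall_ssubset hβ.le
    (fun R _ => mul_card_goodColorings_le_card_insert hβ (fun P hP => (hW P hP).1) hL R)
    (empty_subset univ)
  obtain ⟨c, hc⟩ : (goodColorings W L univ univ).Nonempty := by
    rw [← card_pos, ← Nat.cast_pos (α := ℝ)]
    refine lt_of_lt_of_le ?_ hgrowth
    have := card_pos.2 ⟨_, hdefault⟩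
    positivity
  obtain ⟨hcL, hcW⟩ := mem_goodColorings.1 hc
  exact ⟨c, fun e => by simpa using hcL e, fun P hP => hcW P hP fun e _ => mem_univ e⟩

end Counting

theorem sum_Icc_two_mul_inv_four_pow_le (N : ℕ) :
    ∑ h ∈ Icc 1 N, (2 * h : ℝ) * 4⁻¹ ^ (h - 1) ≤ 4 := by
  have hgeom : HasSum (fun h : ℕ => (h : ℝ) * 4⁻¹ ^ h) (4⁻¹ / (1 - 4⁻¹) ^ 2) :=
    hasSum_coe_mul_geometric_of_norm_lt_one (by norm_num)
  calc ∑ h ∈ Icc 1 N, (2 * h : ℝ) * 4⁻¹ ^ (h - 1) = 8 * ∑ h ∈ Icc 1 N, (h : ℝ) * 4⁻¹ ^ h := by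
        rw [mul_sum]
        refine sum_congr rfl fun h hh => ?_
        obtain ⟨k, rfl⟩ := Nat.exists_eq_add_of_le' (mem_Icc.1 hh).1
        simp only [Nat.add_sub_cancel, pow_succ]
        ring
    _ ≤ 8 * (4⁻¹ / (1 - 4⁻¹) ^ 2) := by
        gcongr
        exact sum_le_hasSum _ (fun h _ => by positivity) hgeom
    _ ≤ 4 := by norm_num

theorem sum_window_weight_le {α : Type*} [DecidableEq α] (w : List α) (a : α) :
    ∑ x ∈ range w.length ×ˢ Icc 1 (w.length / 2) with a ∈ (w.rotate x.1).take (2 * x.2),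
      (4 : ℝ)⁻¹ ^ (x.2 - 1) ≤ 4 * w.count a := by
  rw [sum_filter, sum_product_right]
  calc ∑ h ∈ Icc 1 (w.length / 2), ∑ s ∈ range w.length,
        (if a ∈ (w.rotate s).take (2 * h) then (4 : ℝ)⁻¹ ^ (h - 1) else 0)
      = ∑ h ∈ Icc 1 (w.length / 2),
          (#{s ∈ range w.length | a ∈ (w.rotate s).take (2 * h)} : ℝ) * 4⁻¹ ^ (h - 1) := by
        simp only [← sum_filter, sum_const, nsmul_eq_mul]
    _ ≤ ∑ h ∈ Icc 1 (w.length / 2), ((2 * h * w.count a : ℕ) : ℝ) * 4⁻¹ ^ (h - 1) := by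
        gcongr with h
        exact card_filter_mem_take_rotate_le w a _
    _ = w.count a * ∑ h ∈ Icc 1 (w.length / 2), (2 * h : ℝ) * 4⁻¹ ^ (h - 1) := by
        rw [mul_sum]
        refine sum_congr rfl fun h _ => ?_
        push_cast
        ring
    _ ≤ 4 * w.count a := by
        rw [mul_comm]
        gcongr
        exact sum_Icc_two_mul_inv_four_pow_le _

section Faces

variable {E : Type*} [DecidableEq E]

def faceWindows (G : FacialGraph E) : Finset (List E) :=
  ((G.faces.toFinset.sigma fun w => range w.length ×ˢ Icc 1 (w.length / 2)).image
    fun x => (x.1.rotate x.2.1).take (2 * x.2.2)).filter List.Nodup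

theorem sum_faceWindows_weight_le (G : FacialGraph E) (v : E) :
    ∑ P ∈ faceWindows G with v ∈ P, (4 : ℝ)⁻¹ ^ (P.length / 2 - 1) ≤ 8 := by
  rw [faceWindows]
  refine (sum_le_sum_of_subset_of_nonneg (filter_subset_filter _ (filter_subset _ _))
    fun _ _ _ => by positivity).trans ?_
  rw [filter_image]
  refine (sum_image_le_of_nonneg fun _ _ => by positivity).trans ?_
  have hfaces : ∑ w ∈ G.faces.toFinset, w.count v ≤ 2 := by
    rw [← G.appears_twice v, sum_list_map_count]
    refine sum_le_sum fun w hw => ?_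
    exact Nat.le_mul_of_pos_left _ (by simpa using hw)
  calc _ = ∑ w ∈ G.faces.toFinset, ∑ x ∈ range w.length ×ˢ Icc 1 (w.length / 2) with
        v ∈ (w.rotate x.1).take (2 * x.2), (4 : ℝ)⁻¹ ^ (x.2 - 1) := by
        rw [sum_filter, sum_sigma]
        refine sum_congr rfl fun w _ => ?_
        rw [sum_filter]
        refine sum_congr rfl fun x hx => ?_
        simp only [mem_product, mem_range, mem_Icc] at hx
        have hlen : ((w.rotate x.1).take (2 * x.2)).length / 2 = x.2 := by
          simp only [List.length_take, List.length_rotate]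
          omega
        rw [hlen]
    _ ≤ ∑ w ∈ G.faces.toFinset, 4 * (w.count v : ℝ) :=
        sum_le_sum fun w _ => sum_window_weight_le w v
    _ ≤ 8 := by
        rw [← mul_sum]
        have : (∑ w ∈ G.faces.toFinset, (w.count v : ℝ)) ≤ 2 := by exact_mod_cast hfaces
        linarith

theorem ne_nil_of_mem_faceWindows {G : FacialGraph E} {P : List E} (hP : P ∈ faceWindows G) :
    P ≠ [] := by
  simp only [faceWindows, mem_filter, mem_image, mem_sigma, mem_product, mem_range,
    mem_Icc] at hP
  obtain ⟨⟨⟨w, s, h⟩, ⟨-, hs, hh⟩, rfl⟩, -⟩ := hP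
  rw [← List.length_pos_iff, List.length_take, List.length_rotate]
  omega

theorem mem_faceWindows_of_infix {G : FacialGraph E} {w P : List E} (hnd : P.Nodup)
    (hw : w ∈ G.faces) (hP : P <:+: w ++ w) (hlen : P.length ≤ w.length) {h : ℕ} (hh : 1 ≤ h)
    (hPh : P.length = 2 * h) : P ∈ faceWindows G := by
  obtain ⟨s, hs⟩ := exists_prefix_rotate_of_infix_append_self hP hlen
  refine mem_filter.2 ⟨mem_image.2 ⟨⟨w, s % w.length, h⟩, ?_, ?_⟩, hnd⟩
  · simp only [mem_sigma, List.mem_toFinset, mem_product, mem_range, mem_Icc]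
    exact ⟨hw, Nat.mod_lt _ (by omega), hh, by omega⟩
  · rw [List.rotate_mod, ← hPh]
    exact (List.prefix_iff_eq_take.1 hs).symm

end Faces

/-- The facial Thue choice index of every plane graph is at most 12: for every
assignment of lists of size 12 to the edges there is an edge colouring from the
lists such that no facial path is repetitively coloured. -/
theorem stmt_19 {E : Type*} [DecidableEq E] [Fintype E] (G : FacialGraph E)
    (L : E → Finset ℕ) (hL : ∀ e, 12 ≤ (L e).card) :
    ∃ c : E → ℕ, (∀ e, c e ∈ L e) ∧
      ∀ P : List E, IsFacialPath G P → ∀ h : ℕ, 1 ≤ h → P.length = 2 * h →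
        ∃ i < h, (P.map c)[i]? ≠ (P.map c)[h + i]? := by
  obtain ⟨c, hcL, hc⟩ := exists_forall_not_isRepetitive (W := faceWindows G) (L := L)
    (fun P hP => ⟨(mem_filter.1 hP).2, ne_nil_of_mem_faceWindows hP⟩) (by norm_num : (0 : ℝ) < 4)
    fun v => by
      have : (12 : ℝ) ≤ #(L v) := by exact_mod_cast hL v
      linarith [sum_faceWindows_weight_le G v]
  refine ⟨c, hcL, fun P hP h hh hPh => ?_⟩
  by_contra! hrep
  have hrep' : IsRepetitive c P := (isRepetitive_iff hPh).2 hrep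
  obtain ⟨hnd, w, hw, hlen, hinf | hinf⟩ := hP
  · exact hc P (mem_faceWindows_of_infix hnd hw hinf hlen hh hPh) hrep'
  · exact hc P.reverse (mem_faceWindows_of_infix (List.nodup_reverse.2 hnd) hw hinf (by simpa) hh
      (by simpa)) ((isRepetitive_reverse_iff ⟨h, by omega⟩).2 hrep')
end
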